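/- In the multivariate Bernoulli case, the Shapley effect of variable i equals Sh_i = (1/Var(G(X))) ∑_{A ∋ i} (β_A/|A|) ∑_{B⊆D} β_B Γ_{A,B}, where β solves Γβ = μ for the Hoeffding decomposition of G(X). -/
import Mathlib


open Finset

noncomputable section

/-- Marginal probability `P(X_A = x_A)` for a mass function `p` on `{0,1}^d`. -/
def margProb {d : ℕ} (p : (Fin d → Bool) → ℝ) (A : Finset (Fin d)) (x : Fin d → Bool) : ℝ :=
  ∑ y ∈ univ.filter (fun y : Fin d → Bool => ∀ i ∈ A, y i = x i), p y

/-- The family `e_A(x_A) = (-1)^(∑_{j∈A} x_j) / P(X_A = x_A)`. -/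
def eFun {d : ℕ} (p : (Fin d → Bool) → ℝ) (A : Finset (Fin d)) (x : Fin d → Bool) : ℝ :=
  (-1 : ℝ) ^ (∑ j ∈ A, if x j then (1 : ℕ) else 0) / margProb p A x

/-- Expectation of `f(X)` under the mass function `p`. -/
def expec {d : ℕ} (p : (Fin d → Bool) → ℝ) (f : (Fin d → Bool) → ℝ) : ℝ :=
  ∑ x, p x * f x

/-- Covariance of `f(X)` and `g(X)` under `p`. -/
def covP {d : ℕ} (p : (Fin d → Bool) → ℝ) (f g : (Fin d → Bool) → ℝ) : ℝ :=
  expec p (fun x => f x * g x) - expec p f * expec p g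

lemma margProb_congr {d : ℕ} (p : (Fin d → Bool) → ℝ) (A : Finset (Fin d))
    {x y : Fin d → Bool} (h : ∀ j ∈ A, x j = y j) :
    margProb p A x = margProb p A y := by
  unfold margProb
  apply Finset.sum_congr _ (fun _ _ => rfl)
  apply Finset.filter_congr
  intro z _
  constructor <;> intro hz j hj
  · rw [hz j hj, h j hj]
  · rw [hz j hj, h j hj]

lemma margProb_pos {d : ℕ} (p : (Fin d → Bool) → ℝ) (hpos : ∀ x, 0 < p x)
    (A : Finset (Fin d)) (x : Fin d → Bool) : 0 < margProb p A x := by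
  unfold margProb
  apply Finset.sum_pos (fun y _ => hpos y)
  exact ⟨x, by simp⟩

lemma expec_eFun_zero {d : ℕ} (p : (Fin d → Bool) → ℝ) (hpos : ∀ x, 0 < p x)
    (A : Finset (Fin d)) (hA : A.Nonempty) :
    expec p (eFun p A) = 0 := by
  classical
  obtain ⟨i, hi⟩ := hA
  set f : (Fin d → Bool) → (Fin d → Bool) := fun x j => if j ∈ A then x j else false with hf
  set T : Finset (Fin d → Bool) := univ.filter (fun z => ∀ j, j ∉ A → z j = false) with hT
  have hmap : ∀ x ∈ (univ : Finset (Fin d → Bool)), f x ∈ T := by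
    intro x _; simp only [hT, mem_filter, mem_univ, true_and]
    intro j hj; simp [hf, hj]
  have key := Finset.sum_fiberwise_of_maps_to hmap (fun x => p x * eFun p A x)
  rw [expec, ← key]
  have inner : ∀ z ∈ T, (∑ x ∈ univ.filter (fun x => f x = z), p x * eFun p A x)
      = (-1 : ℝ) ^ (∑ j ∈ A, if z j then (1 : ℕ) else 0) := by
    intro z hz
    simp only [hT, mem_filter, mem_univ, true_and] at hz
    have hfilter : univ.filter (fun x => f x = z)
        = univ.filter (fun x : Fin d → Bool => ∀ j ∈ A, x j = z j) := by
      apply Finset.filter_congr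
      intro x _
      constructor
      · intro h j hj; rw [← congrFun h j]; simp [hf, hj]
      · intro h; funext j
        by_cases hj : j ∈ A
        · simp [hf, hj, h j hj]
        · simp [hf, hj, hz j hj]
    have heq : ∀ x ∈ univ.filter (fun x => f x = z), p x * eFun p A x = p x * eFun p A z := by
      intro x hx
      rw [hfilter, mem_filter] at hx
      congr 1
      unfold eFun
      rw [margProb_congr p A hx.2]
      congr 2
      exact Finset.sum_congr rfl (fun j hj => by rw [hx.2 j hj])
    rw [Finset.sum_congr rfl heq, ← Finset.sum_mul, hfilter]
    have : (∑ x ∈ univ.filter (fun x : Fin d → Bool => ∀ j ∈ A, x j = z j), p x)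
        = margProb p A z := rfl
    rw [this]
    unfold eFun
    rw [mul_comm]
    exact div_mul_cancel₀ _ (ne_of_gt (margProb_pos p hpos A z))
  rw [Finset.sum_congr rfl inner]
  -- now ∑ z ∈ T, (-1)^(parity on A) = 0, via involution flipping coordinate i
  refine Finset.sum_involution (fun z _ => Function.update z i (!z i)) ?_ ?_
    (fun z hz => ?_) (fun z hz => ?_)
  · intro z hz
    rw [Finset.sum_eq_sum_sdiff_singleton_add hi
        (fun j => if Function.update z i (!z i) j then (1:ℕ) else 0),
      Finset.sum_eq_sum_sdiff_singleton_add hi (fun j => if z j then (1:ℕ) else 0)]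
    have hrest : (∑ j ∈ A \ {i}, if Function.update z i (!z i) j then (1:ℕ) else 0)
        = ∑ j ∈ A \ {i}, if z j then (1:ℕ) else 0 := by
      apply Finset.sum_congr rfl
      intro j hj
      rw [Finset.mem_sdiff, Finset.mem_singleton] at hj
      rw [Function.update_of_ne hj.2]
    rw [hrest, Function.update_self]
    cases hb : z i <;> simp [pow_add]
  · intro z hz _
    intro h
    have := congrFun h i
    simp at this
  · -- g_mem
    simp only [hT, mem_filter, mem_univ, true_and] at hz ⊢
    intro j hj
    have hji : j ≠ i := fun h => hj (h ▸ hi)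
    simp [Function.update, hji, hz j hj]
  · -- hg₄
    funext j
    by_cases h : j = i <;> simp [Function.update, h]

lemma cov_eFun {d : ℕ} (p : (Fin d → Bool) → ℝ) (hpos : ∀ x, 0 < p x)
    (G : (Fin d → Bool) → ℝ) (β : Finset (Fin d) → ℝ)
    (hβ : ∀ x, G x = ∑ A : Finset (Fin d), β A * eFun p A x)
    (A : Finset (Fin d)) (hA : A.Nonempty) :
    covP p G (fun x => β A * eFun p A x)
      = β A * ∑ B : Finset (Fin d), β B * expec p (fun x => eFun p A x * eFun p B x) := by
  have h2 : expec p (fun x => β A * eFun p A x) = 0 := by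
    unfold expec
    have hc : ∀ x, p x * (β A * eFun p A x) = β A * (p x * eFun p A x) := fun x => by ring
    rw [Finset.sum_congr rfl (fun x _ => hc x), ← Finset.mul_sum]
    have : (∑ x, p x * eFun p A x) = expec p (eFun p A) := rfl
    rw [this, expec_eFun_zero p hpos A hA, mul_zero]
  have h1 : expec p (fun x => G x * (β A * eFun p A x))
      = β A * ∑ B : Finset (Fin d), β B * expec p (fun x => eFun p A x * eFun p B x) := by
    simp only [expec]
    calc ∑ x, p x * (G x * (β A * eFun p A x))
        = ∑ x, ∑ B : Finset (Fin d), β A * (β B * (p x * (eFun p A x * eFun p B x))) := by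
          apply Finset.sum_congr rfl
          intro x _
          rw [hβ x, Finset.sum_mul, Finset.mul_sum]
          apply Finset.sum_congr rfl
          intro B _
          ring
      _ = ∑ B : Finset (Fin d), ∑ x, β A * (β B * (p x * (eFun p A x * eFun p B x))) :=
          Finset.sum_comm
      _ = β A * ∑ B : Finset (Fin d), β B * ∑ x, p x * (eFun p A x * eFun p B x) := by
          rw [Finset.mul_sum]
          apply Finset.sum_congr rfl
          intro B _
          rw [Finset.mul_sum, Finset.mul_sum]
  unfold covP
  rw [h1, h2, mul_zero, sub_zero]

/-- In the multivariate Bernoulli case, the Shapley effect of variable `i`, namely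
`Sh_i = ∑_{A ∋ i} S_A/|A|` with `S_A = Cov(G, β_A e_A)/Var(G)`, equals
`(1/Var(G)) ∑_{A ∋ i} (β_A/|A|) ∑_B β_B Γ_{A,B}`. -/
theorem shapley_effect_formula {d : ℕ}
    (p : (Fin d → Bool) → ℝ) (hpos : ∀ x, 0 < p x) (hsum : ∑ x, p x = 1)
    (G : (Fin d → Bool) → ℝ) (β : Finset (Fin d) → ℝ)
    (hβ : ∀ x, G x = ∑ A : Finset (Fin d), β A * eFun p A x)
    (hvar : 0 < covP p G G) (i : Fin d) :
    ∑ A ∈ univ.filter (fun A : Finset (Fin d) => i ∈ A),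
        (covP p G (fun x => β A * eFun p A x) / covP p G G) / A.card
      = (1 / covP p G G) *
        ∑ A ∈ univ.filter (fun A : Finset (Fin d) => i ∈ A),
          (β A / A.card) *
            ∑ B : Finset (Fin d), β B * expec p (fun x => eFun p A x * eFun p B x) := by
  rw [Finset.mul_sum]
  apply Finset.sum_congr rfl
  intro A hA
  rw [Finset.mem_filter] at hA
  rw [cov_eFun p hpos G β hβ A ⟨i, hA.2⟩]
  ring
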